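/- arXiv:2112.00029 — 7 statements merged into one kernel-verified Lean document; each statement's English description precedes it below -/
import Mathlib

section
/- Let b ≥ 1 and let n = 2^s with s ≥ 2 (so n ≥ 4). Every nb × nb block butterfly matrix of block size b is also an nb × nb block butterfly matrix of block size 2b; that is, if M can be written as a product B_n^{(n,b)} B_{n/2}^{(n,b)} ⋯ B_2^{(n,b)} of block butterfly factor matrices of block size b, then M can also be written as a product B_{n/2}^{(n/2,2b)} B_{n/4}^{(n/2,2b)} ⋯ B_2^{(n/2,2b)} of block butterfly factor matrices of block size 2b. -/
/-- A matrix `M` of size `N × N` (thought of as `n·b × n·b`) is a *block butterfly factor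
matrix* of stride `k` and block size `b` if its support is contained in the block-diagonal
pattern of `n/k` block butterfly factors of size `k·b`: the `b`-block indices `⌊i/b⌋` and
`⌊j/b⌋` of any nonzero entry must lie in the same size-`k` group and agree modulo `k/2`. -/
def IsBFactorMatrix {N : ℕ} (k b : ℕ) (M : Matrix (Fin N) (Fin N) ℝ) : Prop :=
  ∀ i j : Fin N, M i j ≠ 0 →
    ((i : ℕ) / b) / k = ((j : ℕ) / b) / k ∧
    ((i : ℕ) / b) % (k / 2) = ((j : ℕ) / b) % (k / 2)

/-- `M` is a block butterfly matrix with `n = 2^s` diagonal blocks of block size `b`: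
a product `B_n^{(n,b)} B_{n/2}^{(n,b)} ⋯ B_2^{(n,b)}` of block butterfly factor matrices
with strides `2^s, 2^{s-1}, …, 2`. -/
def IsBlockButterfly {N : ℕ} (s b : ℕ) (M : Matrix (Fin N) (Fin N) ℝ) : Prop :=
  ∃ F : Fin s → Matrix (Fin N) (Fin N) ℝ,
    (∀ i : Fin s, IsBFactorMatrix (2 ^ (s - (i : ℕ))) b (F i)) ∧
    M = (List.ofFn F).prod


def IsBlockDiagonalOfSize {N : ℕ} (c : ℕ) (M : Matrix (Fin N) (Fin N) ℝ) : Prop :=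
  ∀ i j : Fin N, M i j ≠ 0 → (i : ℕ) / c = (j : ℕ) / c

namespace IsBlockDiagonalOfSize

variable {N c : ℕ} {M : Matrix (Fin N) (Fin N) ℝ}

lemma of_dvd {d : ℕ} (hcd : c ∣ d) (h : IsBlockDiagonalOfSize c M) :
    IsBlockDiagonalOfSize d M := by
  obtain ⟨e, rfl⟩ := hcd
  intro i j hij
  rw [← Nat.div_div_eq_div_mul, ← Nat.div_div_eq_div_mul, h i j hij]

lemma mul {M' : Matrix (Fin N) (Fin N) ℝ} (h : IsBlockDiagonalOfSize c M)
    (h' : IsBlockDiagonalOfSize c M') : IsBlockDiagonalOfSize c (M * M') := by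
  intro i j hij
  rw [Matrix.mul_apply] at hij
  obtain ⟨l, -, hl⟩ := Finset.exists_ne_zero_of_sum_ne_zero hij
  exact (h i l (left_ne_zero_of_mul hl)).trans (h' l j (right_ne_zero_of_mul hl))

end IsBlockDiagonalOfSize

section IsBFactorMatrix

variable {N b : ℕ} {M : Matrix (Fin N) (Fin N) ℝ}

lemma isBFactorMatrix_two_iff :
    IsBFactorMatrix 2 b M ↔ IsBlockDiagonalOfSize (b * 2) M := by
  simp [IsBFactorMatrix, IsBlockDiagonalOfSize, Nat.div_div_eq_div_mul, Nat.mod_one]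

lemma IsBFactorMatrix.double_blockSize {k : ℕ} (hk : 2 ∣ k) (h : IsBFactorMatrix (2 * k) b M) :
    IsBFactorMatrix k (2 * b) M := by
  obtain ⟨l, rfl⟩ := hk
  have hdiv : ∀ x : ℕ, x / (2 * b) = x / b / 2 := fun x => by
    rw [Nat.div_div_eq_div_mul, mul_comm]
  intro i j hij
  obtain ⟨hgroup, hmod⟩ := h i j hij
  refine ⟨?_, ?_⟩
  · rwa [hdiv, hdiv, Nat.div_div_eq_div_mul (i / b), Nat.div_div_eq_div_mul (j / b)]
  · rw [Nat.mul_div_cancel_left _ two_pos] at hmod ⊢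
    rw [hdiv, hdiv, ← Nat.mod_mul_right_div_self (i / b), ← Nat.mod_mul_right_div_self (j / b),
      hmod]

lemma IsBFactorMatrix.mul_of_two {M' : Matrix (Fin N) (Fin N) ℝ}
    (h : IsBFactorMatrix 2 b M) (h' : IsBFactorMatrix 2 b M') :
    IsBFactorMatrix 2 b (M * M') :=
  isBFactorMatrix_two_iff.2 ((isBFactorMatrix_two_iff.1 h).mul (isBFactorMatrix_two_iff.1 h'))

lemma IsBFactorMatrix.double_blockSize_of_two (h : IsBFactorMatrix 2 b M) :
    IsBFactorMatrix 2 (2 * b) M :=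
  isBFactorMatrix_two_iff.2 <| (isBFactorMatrix_two_iff.1 h).of_dvd ⟨2, by ring⟩

end IsBFactorMatrix

lemma List.prod_ofFn_eq_prod_ofFn_snoc_mul {α : Type*} [Monoid α] {n : ℕ} (F : Fin (n + 2) → α) :
    (List.ofFn F).prod =
      (List.ofFn (Fin.snoc (Fin.init (Fin.init F))
        (F (Fin.last n).castSucc * F (Fin.last (n + 1))))).prod := by
  rw [List.ofFn_succ', List.prod_concat, List.ofFn_succ', List.prod_concat, List.ofFn_succ',
    List.prod_concat]
  simp [Fin.init, mul_assoc]

/-- Read with `2b`-blocks as units, a factor of stride `2k` becomes one of stride `k`, so the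
first `s - 2` factors carry over; the last two (strides 4 and 2) are both block diagonal with
`4b`-blocks, and so is their product, which becomes the final factor of stride 2. -/
theorem block_butterfly_double_block_size_general (b s : ℕ) (hs : 2 ≤ s)
    (M : Matrix (Fin (2 ^ s * b)) (Fin (2 ^ s * b)) ℝ)
    (h : IsBlockButterfly s b M) :
    IsBlockButterfly (s - 1) (2 * b) M := by
  obtain ⟨t, rfl⟩ : ∃ t, s = t + 2 := ⟨s - 2, by omega⟩
  obtain ⟨F, hF, rfl⟩ := h
  refine ⟨_, fun i => ?_, List.prod_ofFn_eq_prod_ofFn_snoc_mul F⟩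
  induction i using Fin.lastCases with
  | last =>
    have h4 := hF (Fin.last t).castSucc
    have h2 := hF (Fin.last (t + 1))
    simp only [Fin.val_castSucc, Fin.val_last, Nat.add_sub_cancel_left,
      show t + 2 - (t + 1) = 1 by omega] at h4 h2
    simpa [show t + 2 - 1 - t = 1 by omega] using
      (h4.double_blockSize (k := 2) dvd_rfl).mul_of_two h2.double_blockSize_of_two
  | cast i =>
    have hi := hF i.castSucc.castSucc
    simp only [Fin.val_castSucc, Fin.snoc_castSucc, Fin.init] at hi ⊢
    rw [show 2 ^ (t + 2 - (i : ℕ)) = 2 * 2 ^ (t + 1 - i) by rw [← pow_succ']; congr 1; omega] at hi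
    rw [show t + 2 - 1 - (i : ℕ) = t + 1 - i by omega]
    exact hi.double_blockSize (dvd_pow_self 2 (by omega))

/-- For `b ≥ 1` and `n = 2^s` with `s ≥ 2`, every `nb × nb` block butterfly
matrix of block size `b` is also a block butterfly matrix of block size `2b`
(with `n/2 = 2^{s-1}` blocks). -/
theorem block_butterfly_double_block_size (b s : ℕ) (hb : 1 ≤ b) (hs : 2 ≤ s)
    (M : Matrix (Fin (2 ^ s * b)) (Fin (2 ^ s * b)) ℝ)
    (h : IsBlockButterfly s b M) :
    IsBlockButterfly (s - 1) (2 * b) M :=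
  block_butterfly_double_block_size_general b s hs M h
end

section
/- Let b ≥ 1, let n be a power of 2, and let k be a power of 2 with 4 ≤ k ≤ n. Every block butterfly factor matrix B_k^{(n,b)} of size nb with stride k and block size b is also a block butterfly factor matrix B_{k/2}^{(n/2,2b)} of size nb = (n/2)(2b) with stride k/2 and block size 2b. -/
/-- For `b ≥ 1`, `n = 2^t` a power of 2 and `k = 2^u` a power of 2 with
`4 ≤ k ≤ n`, every block butterfly factor matrix `B_k^{(n,b)}` of size `nb` with stride `k`
and block size `b` is also a block butterfly factor matrix `B_{k/2}^{(n/2,2b)}` of size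
`nb = (n/2)(2b)` with stride `k/2` and block size `2b`. -/
theorem bfactor_matrix_double_block_size (b t u : ℕ) (hb : 1 ≤ b)
    (hu : 2 ≤ u) (hut : u ≤ t)
    (M : Matrix (Fin (2 ^ t * b)) (Fin (2 ^ t * b)) ℝ)
    (h : IsBFactorMatrix (2 ^ u) b M) :
    IsBFactorMatrix (2 ^ u / 2) (2 * b) M := by
  obtain ⟨v, rfl⟩ : ∃ v, u = v + 2 := ⟨u - 2, by omega⟩
  intro i j hij
  obtain ⟨h1, h2⟩ := h i j hij
  have e : ∀ m : ℕ, m / (2 * b) = m / b / 2 := fun m => by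
    rw [Nat.div_div_eq_div_mul, mul_comm]
  have p1 : 2 ^ (v + 2) / 2 = 2 ^ (v + 1) := by
    rw [pow_succ]; omega
  have p2 : 2 ^ (v + 2) / 2 / 2 = 2 ^ v := by
    rw [pow_succ, pow_succ]; omega
  have key1 : ∀ x : ℕ, x / 2 / 2 ^ (v + 1) = x / 2 ^ (v + 2) := fun x => by
    rw [Nat.div_div_eq_div_mul, ← pow_succ']
  have key2 : ∀ x : ℕ, x / 2 % 2 ^ v = x % 2 ^ (v + 1) / 2 := fun x => by
    rw [pow_succ', Nat.mod_mul_right_div_self]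
  rw [p1] at h2
  constructor
  · rw [e, e, p1, key1, key1]
    exact h1
  · rw [e, e, p2, key2, key2, h2]
end

section
/- Let b ≥ 1 and let n ≥ 4 be a power of 2. For any block butterfly factor matrices F_4 of the form B_4^{(n,b)} (size nb, stride 4, block size b) and F_2 of the form B_2^{(n,b)} (size nb, stride 2, block size b), the product F_4 · F_2 is a block butterfly factor matrix of the form B_2^{(n/2,2b)} (size nb = (n/2)(2b), stride 2, block size 2b). -/
/-- Let `b ≥ 1` and `n = 2^t ≥ 4` a power of 2. For any block butterfly
factor matrices `F₄` of the form `B_4^{(n,b)}` and `F₂` of the form `B_2^{(n,b)}`, the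
product `F₄ · F₂` is a block butterfly factor matrix of the form `B_2^{(n/2,2b)}`
(size `nb = (n/2)(2b)`, stride 2, block size `2b`). -/
theorem bfactor_stride4_mul_stride2 (b t : ℕ) (hb : 1 ≤ b) (ht : 2 ≤ t)
    (F4 F2 : Matrix (Fin (2 ^ t * b)) (Fin (2 ^ t * b)) ℝ)
    (h4 : IsBFactorMatrix 4 b F4) (h2 : IsBFactorMatrix 2 b F2) :
    IsBFactorMatrix 2 (2 * b) (F4 * F2) := by
  intro i j hij
  have hex : ∃ l, F4 i l * F2 l j ≠ 0 := by
    by_contra h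
    push_neg at h
    exact hij (by simpa [Matrix.mul_apply] using Finset.sum_eq_zero fun l _ => h l)
  obtain ⟨l, hl⟩ := hex
  have h1 := (h4 i l (left_ne_zero_of_mul hl)).1
  have h2' := (h2 l j (right_ne_zero_of_mul hl)).1
  have key : ∀ m : ℕ, m / (2 * b) / 2 = m / b / 4 := by
    intro m
    rw [Nat.div_div_eq_div_mul, Nat.div_div_eq_div_mul]
    ring_nf
  have hl4 : ((l : ℕ) / b) / 4 = ((j : ℕ) / b) / 4 := by
    rw [show (4:ℕ) = 2 * 2 from rfl, ← Nat.div_div_eq_div_mul, ← Nat.div_div_eq_div_mul, h2']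
  constructor
  · rw [key, key, h1, hl4]
  · simp [Nat.mod_one]
end

section
/- Let N be a power of 2 and let b be a power of 2 with N ≥ 2b. Every N × N butterfly matrix (i.e., block butterfly matrix with block size 1) is also an N × N block butterfly matrix with block size b. -/
/-!
Grouping indices into blocks of size `2^q` turns a butterfly factor of stride `2^(t + q)` into a
block butterfly factor of stride `2^t` and block size `2^q`, provided `t ≥ 1`. This handles the
first `p - q - 1` factors of a butterfly of size `2^p`. The remaining `q + 1` factors have stride
at most `2^(q + 1)`, so each of them, and hence their product, only mixes indices within one group
of `2^(q + 1)` consecutive ones: the product is a single block butterfly factor of stride `2` and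
block size `2^q`.
-/

namespace IsBFactorMatrix

variable {N k b : ℕ} {A B : Matrix (Fin N) (Fin N) ℝ}

theorem one : IsBFactorMatrix k b (1 : Matrix (Fin N) (Fin N) ℝ) := by
  intro i j hij
  obtain rfl : i = j := by_contra fun hne => hij (Matrix.one_apply_ne hne)
  exact ⟨rfl, rfl⟩

theorem mul (hA : IsBFactorMatrix k b A) (hB : IsBFactorMatrix k b B) :
    IsBFactorMatrix k b (A * B) := by
  intro i j hij
  rw [Matrix.mul_apply] at hij
  obtain ⟨m, -, hm⟩ := Finset.exists_ne_zero_of_sum_ne_zero hij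
  obtain ⟨hdiv₁, hmod₁⟩ := hA i m (left_ne_zero_of_mul hm)
  obtain ⟨hdiv₂, hmod₂⟩ := hB m j (right_ne_zero_of_mul hm)
  exact ⟨hdiv₁.trans hdiv₂, hmod₁.trans hmod₂⟩

theorem list_prod {L : List (Matrix (Fin N) (Fin N) ℝ)} (hL : ∀ A ∈ L, IsBFactorMatrix k b A) :
    IsBFactorMatrix k b L.prod :=
  List.prod_induction _ (fun _ _ => mul) one hL

theorem enlarge_block {c : ℕ} (hk : 2 ∣ k) (hA : IsBFactorMatrix (k * c) b A) :
    IsBFactorMatrix k (b * c) A := by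
  intro i j hij
  obtain ⟨hdiv, hmod⟩ := hA i j hij
  have hhalf : k * c / 2 = c * (k / 2) := by
    rw [mul_comm, Nat.mul_div_assoc c hk]
  rw [hhalf] at hmod
  have hregroup (x : ℕ) : x / (b * c) % (k / 2) = x / b % (c * (k / 2)) / c := by
    rw [Nat.mod_mul_right_div_self, Nat.div_div_eq_div_mul]
  refine ⟨?_, ?_⟩
  · simpa only [Nat.div_div_eq_div_mul, mul_comm k c, mul_assoc] using hdiv
  · rw [hregroup, hregroup, hmod]

theorem stride_two_of_dvd {c : ℕ} (hA : IsBFactorMatrix k b A) (hdvd : b * k ∣ 2 * c) :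
    IsBFactorMatrix 2 c A := by
  intro i j hij
  obtain ⟨d, hd⟩ := hdvd
  have hdiv := congrArg (· / d) (hA i j hij).1
  simp only [Nat.div_div_eq_div_mul] at hdiv
  refine ⟨?_, by simp only [Nat.div_self two_pos, Nat.mod_one]⟩
  rwa [Nat.div_div_eq_div_mul, Nat.div_div_eq_div_mul, mul_comm c, hd]

end IsBFactorMatrix

theorem IsBlockButterfly.enlarge_block {N s q b : ℕ} {M : Matrix (Fin N) (Fin N) ℝ}
    (h : IsBlockButterfly (s + (q + 1)) b M) : IsBlockButterfly (s + 1) (b * 2 ^ q) M := by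
  obtain ⟨F, hF, rfl⟩ := h
  set tail := (List.ofFn fun t : Fin (q + 1) => F (Fin.natAdd s t)).prod
  refine ⟨Fin.snoc (fun i : Fin s => F (Fin.castAdd (q + 1) i)) tail, ?_, ?_⟩
  · refine Fin.lastCases ?_ fun i => ?_
    · rw [Fin.snoc_last, Fin.val_last, Nat.add_sub_cancel_left, pow_one]
      refine IsBFactorMatrix.list_prod fun A hA => ?_
      obtain ⟨t, rfl⟩ := List.mem_ofFn.mp hA
      refine (hF _).stride_two_of_dvd ⟨2 ^ (t : ℕ), ?_⟩
      have ht := t.isLt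
      rw [Fin.val_natAdd, mul_left_comm, ← pow_succ', mul_assoc, ← pow_add]
      congr 2
      omega
    · rw [Fin.snoc_castSucc, Fin.val_castSucc]
      have hi := i.isLt
      refine IsBFactorMatrix.enlarge_block (dvd_pow_self 2 (by omega)) ?_
      rw [← pow_add, show s + 1 - i + q = s + (q + 1) - i by omega]
      exact hF _
  · rw [List.ofFn_add (f := F), List.prod_append, List.ofFn_succ' (Fin.snoc _ tail),
      List.prod_concat]
    simp only [Fin.snoc_castSucc, Fin.snoc_last]
    rfl

/-- Let `N = 2^p` and `b = 2^q` be powers of two with `N ≥ 2b`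
(i.e. `q + 1 ≤ p`). Every `N × N` butterfly matrix (block butterfly of block size 1,
with `N = 2^p` blocks) is also an `N × N` block butterfly matrix with block size `b`
(with `N/b = 2^{p-q}` blocks). -/
theorem butterfly_is_block_butterfly (p q : ℕ) (hpq : q + 1 ≤ p)
    (M : Matrix (Fin (2 ^ p)) (Fin (2 ^ p)) ℝ)
    (h : IsBlockButterfly p 1 M) :
    IsBlockButterfly (p - q) (2 ^ q) M := by
  obtain ⟨s, rfl⟩ : ∃ s, p = s + (q + 1) := ⟨p - (q + 1), by omega⟩
  rw [show s + (q + 1) - q = s + 1 by omega, ← one_mul (2 ^ q)]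
  exact h.enlarge_block
end

section
/- Let m ≥ 1, let B_1, …, B_m be n × n real matrices, let B_max ≥ max_i ‖B_i‖_F with B_max > 0, let 0 < c ≤ 1/2 and 0 < ε ≤ 1, and let λ ∈ ℝ satisfy |λ| ≤ c√ε / (m · B_max). Then the product of residual factors is ε-close in Frobenius norm to its first-order expansion: ‖ (I + λB_1)(I + λB_2)⋯(I + λB_m) − (I + λ(B_1 + B_2 + ⋯ + B_m)) ‖_F ≤ ε. -/
/-- The Frobenius norm of a real square matrix. -/
noncomputable def frobeniusNorm {n : ℕ} (M : Matrix (Fin n) (Fin n) ℝ) : ℝ :=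
  Real.sqrt (∑ i, ∑ j, (M i j) ^ 2)

/-!
Write `E_k` for the error of the first-order expansion of `(1 + a₁)⋯(1 + a_k)` in a normed ring.
Peeling off the first factor gives `E_{k+1} = E_k + a₁ S + a₁ E_k`, where `S` is the sum of the
remaining `aᵢ`, and with `s = ∑ ‖aᵢ‖` induction yields `‖E_k‖ ≤ exp s - 1 - s`, since
`1 + ‖a₁‖ ≤ exp ‖a₁‖`. For the residual factors `aᵢ = λ Bᵢ` we have `s ≤ |λ| m B_max ≤ c √ε ≤ 1`,
and `exp s - 1 - s ≤ s² ≤ ε` for such `s`.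
-/

open Real

theorem norm_prod_one_add_sub_one_add_sum_le {R : Type*} [SeminormedRing R] :
    ∀ {k : ℕ} (a : Fin k → R),
      ‖(List.ofFn fun i => 1 + a i).prod - (1 + ∑ i, a i)‖
        ≤ exp (∑ i, ‖a i‖) - 1 - ∑ i, ‖a i‖
  | 0, _ => by simp
  | k + 1, a => by
    set S := ∑ i : Fin k, a i.succ
    set s := ∑ i : Fin k, ‖a i.succ‖
    set E := (List.ofFn fun i : Fin k => 1 + a i.succ).prod - (1 + S)
    have hE : ‖E‖ ≤ exp s - 1 - s := norm_prod_one_add_sub_one_add_sum_le (a ·.succ)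
    have hS : ‖S‖ ≤ s := norm_sum_le _ _
    have hsplit : (1 + a 0) * (List.ofFn fun i : Fin k => 1 + a i.succ).prod - (1 + (a 0 + S))
        = E + a 0 * S + a 0 * E := by
      simp only [E]; noncomm_ring
    rw [List.ofFn_succ, List.prod_cons, Fin.sum_univ_succ, Fin.sum_univ_succ, hsplit]
    calc ‖E + a 0 * S + a 0 * E‖ ≤ ‖E‖ + ‖a 0‖ * ‖S‖ + ‖a 0‖ * ‖E‖ := by
          grw [norm_add_le, norm_add_le, norm_mul_le, norm_mul_le]
      _ ≤ (exp s - 1 - s) + ‖a 0‖ * s + ‖a 0‖ * (exp s - 1 - s) := by gcongr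
      _ = (1 + ‖a 0‖) * exp s - 1 - (‖a 0‖ + s) := by ring
      _ ≤ exp ‖a 0‖ * exp s - 1 - (‖a 0‖ + s) := by
          grw [← add_one_le_exp ‖a 0‖, add_comm ‖a 0‖ 1]
      _ = exp (‖a 0‖ + s) - 1 - (‖a 0‖ + s) := by rw [exp_add]

theorem exp_sub_one_sub_le_sq {x : ℝ} (hx : |x| ≤ 1) : exp x - 1 - x ≤ x ^ 2 :=
  (le_abs_self _).trans (abs_exp_sub_one_sub_id_le hx)

section Frobenius

open scoped Matrix.Norms.Frobenius

theorem frobeniusNorm_eq_norm {n : ℕ} (M : Matrix (Fin n) (Fin n) ℝ) :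
    frobeniusNorm M = ‖M‖ := by
  rw [Matrix.frobenius_norm_def, frobeniusNorm, sqrt_eq_rpow]
  norm_num [norm_eq_abs, rpow_natCast, sq_abs]

theorem frobeniusNorm_prod_one_add_smul_sub_le {n m : ℕ} (B : Fin m → Matrix (Fin n) (Fin n) ℝ)
    (lam : ℝ) :
    frobeniusNorm
        ((List.ofFn fun i => (1 : Matrix (Fin n) (Fin n) ℝ) + lam • B i).prod
          - (1 + lam • ∑ i, B i))
      ≤ exp (|lam| * ∑ i, frobeniusNorm (B i)) - 1 - |lam| * ∑ i, frobeniusNorm (B i) := by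
  have hnorm : |lam| * ∑ i, frobeniusNorm (B i) = ∑ i, ‖lam • B i‖ := by
    simp only [Finset.mul_sum, frobeniusNorm_eq_norm, norm_smul, norm_eq_abs]
  rw [hnorm, frobeniusNorm_eq_norm, Finset.smul_sum]
  exact norm_prod_one_add_sub_one_add_sum_le fun i => lam • B i

end Frobenius

theorem flat_butterfly_approx_general (n m : ℕ)
    (B : Fin m → Matrix (Fin n) (Fin n) ℝ)
    (Bmax : ℝ) (hBmax : 0 < Bmax) (hB : ∀ i, frobeniusNorm (B i) ≤ Bmax)
    (c ε lam : ℝ) (hc : 0 < c) (hc' : c ≤ 1 / 2) (hε : 0 < ε) (hε' : ε ≤ 1)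
    (hlam : |lam| ≤ c * Real.sqrt ε / (m * Bmax)) :
    frobeniusNorm
      ((List.ofFn fun i => (1 : Matrix (Fin n) (Fin n) ℝ) + lam • B i).prod
        - ((1 : Matrix (Fin n) (Fin n) ℝ) + lam • ∑ i, B i)) ≤ ε := by
  set s := |lam| * ∑ i, frobeniusNorm (B i)
  have hs₀ : 0 ≤ s := by unfold s frobeniusNorm; positivity
  have hsum : ∑ i, frobeniusNorm (B i) ≤ m * Bmax := by
    simpa using Finset.sum_le_card_nsmul Finset.univ _ _ fun i _ => hB i
  have hs : s ≤ √ε := calc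
    s ≤ |lam| * (m * Bmax) := mul_le_mul_of_nonneg_left hsum (abs_nonneg lam)
    _ ≤ c * √ε := mul_le_of_le_div₀ (by positivity) (by positivity) hlam
    _ ≤ √ε := mul_le_of_le_one_left (sqrt_nonneg ε) (by linarith)
  have hs₁ : |s| ≤ 1 := by rw [abs_of_nonneg hs₀]; exact hs.trans (sqrt_le_one.mpr hε')
  calc _ ≤ exp s - 1 - s := frobeniusNorm_prod_one_add_smul_sub_le B lam
    _ ≤ s ^ 2 := exp_sub_one_sub_le_sq hs₁
    _ ≤ √ε ^ 2 := pow_le_pow_left₀ hs₀ hs 2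
    _ = ε := sq_sqrt hε.le

/-- Let `m ≥ 1`, let `B₁, …, B_m` be `n × n` real matrices with
`‖B_i‖_F ≤ B_max` and `B_max > 0`, let `0 < c ≤ 1/2`, `0 < ε ≤ 1`, and let `λ` satisfy
`|λ| ≤ c√ε / (m · B_max)`.  Then
`‖(I + λB₁)(I + λB₂)⋯(I + λB_m) − (I + λ(B₁ + ⋯ + B_m))‖_F ≤ ε`. -/
theorem flat_butterfly_approx (n m : ℕ) (hm : 1 ≤ m)
    (B : Fin m → Matrix (Fin n) (Fin n) ℝ)
    (Bmax : ℝ) (hBmax : 0 < Bmax) (hB : ∀ i, frobeniusNorm (B i) ≤ Bmax)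
    (c ε lam : ℝ) (hc : 0 < c) (hc' : c ≤ 1 / 2) (hε : 0 < ε) (hε' : ε ≤ 1)
    (hlam : |lam| ≤ c * Real.sqrt ε / (m * Bmax)) :
    frobeniusNorm
      ((List.ofFn fun i => (1 : Matrix (Fin n) (Fin n) ℝ) + lam • B i).prod
        - ((1 : Matrix (Fin n) (Fin n) ℝ) + lam • ∑ i, B i)) ≤ ε :=
  flat_butterfly_approx_general n m B Bmax hBmax hB c ε lam hc hc' hε hε' hlam
end

section
/- For every weight matrix W = (w_1, …, w_m) ∈ ℝ^{d×m}, the dropout loss decomposes as the classical loss plus an explicit regularizer: L(W) = L̂(W) + (1−q)/(2mq) · Σ_{i=1}^{n} Σ_{r=1}^{m} φ(w_r^⊤ x_i)². -/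
/-- The ReLU activation. -/
noncomputable def relu (z : ℝ) : ℝ := max z 0

/-- The two-layer network `f(W, x) = (1/√m) Σ_r a_r φ(w_r^⊤ x)`. -/
noncomputable def twoNet (m d : ℕ) (a : Fin m → ℝ) (W : Fin m → Fin d → ℝ)
    (x : Fin d → ℝ) : ℝ :=
  (1 / Real.sqrt m) * ∑ r, a r * relu (∑ k, W r k * x k)

/-- The classical squared loss `L̂(W) = (1/2) Σ_i (f(W, x_i) − y_i)²`. -/
noncomputable def classicalLoss (m d n : ℕ) (a : Fin m → ℝ)
    (x : Fin n → Fin d → ℝ) (y : Fin n → ℝ) (W : Fin m → Fin d → ℝ) : ℝ :=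
  (1 / 2) * ∑ i, (twoNet m d a W (x i) - y i) ^ 2

/-- The dropout network `F(W, x, σ) = (1/√m) Σ_r a_r σ_r φ(w_r^⊤ x)`, where the mask is
encoded by `σ : Fin m → Bool`, with `σ_r = 1/q` when `σ r = true` and `σ_r = 0` otherwise. -/
noncomputable def dropoutNet (m d : ℕ) (q : ℝ) (a : Fin m → ℝ) (σ : Fin m → Bool)
    (W : Fin m → Fin d → ℝ) (x : Fin d → ℝ) : ℝ :=
  (1 / Real.sqrt m) * ∑ r, a r * (if σ r then 1 / q else 0) * relu (∑ k, W r k * x k)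

/-- The dropout loss `L(W) = (1/2) E_σ[Σ_i (F(W, x_i, σ) − y_i)²]`, where the `σ_r` are
independent, equal to `1/q` with probability `q` and `0` with probability `1 − q`;
the expectation is written as a finite sum over all masks `σ : Fin m → Bool`. -/
noncomputable def dropoutLoss (m d n : ℕ) (q : ℝ) (a : Fin m → ℝ)
    (x : Fin n → Fin d → ℝ) (y : Fin n → ℝ) (W : Fin m → Fin d → ℝ) : ℝ :=
  (1 / 2) * ∑ σ : Fin m → Bool,
    (∏ r, if σ r then q else 1 - q) *
      ∑ i, (dropoutNet m d q a σ W (x i) - y i) ^ 2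

/-!
Under the mask distribution the coordinates `σ_r` are independent, with mean `1` and variance
`(1 - q) / q`. So for each input the dropout network `F` has mean the plain network `f`, and its
expected squared error is the squared error of `f` plus the variance of `F`, which by independence
is `(1 - q) / (m q) · Σ_r a_r² φ(w_r^⊤ x)²`; finally `a_r² = 1`.
-/

open Finset

section ProductWeights

variable {ι α : Type*} [Fintype ι] [DecidableEq ι] [Fintype α] {p : α → ℝ}

theorem sum_prod_weight_mul_prod (p : α → ℝ) (h : ι → α → ℝ) :
    ∑ σ : ι → α, (∏ i, p (σ i)) * ∏ i, h i (σ i) = ∏ i, ∑ a, p a * h i a := by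
  rw [Fintype.prod_sum]
  simp only [prod_mul_distrib]

theorem sum_prod_weight_mul_apply (hp : ∑ a, p a = 1) (i : ι) (f : α → ℝ) :
    ∑ σ : ι → α, (∏ t, p (σ t)) * f (σ i) = ∑ a, p a * f a := by
  have h := sum_prod_weight_mul_prod p (fun t a => if t = i then f a else 1)
  rw [Fintype.prod_eq_single i (fun t ht => by simp [ht, hp])] at h
  simpa using h

theorem sum_prod_weight_mul_apply_mul_apply (hp : ∑ a, p a = 1) {i j : ι} (hij : i ≠ j)
    (f g : α → ℝ) :
    ∑ σ : ι → α, (∏ t, p (σ t)) * (f (σ i) * g (σ j)) = (∑ a, p a * f a) * ∑ a, p a * g a := by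
  set h : ι → α → ℝ := fun t a => if t = i then f a else if t = j then g a else 1
  have hrest : ∀ t, t ≠ i ∧ t ≠ j → h t = 1 := fun t ht => funext fun a => by simp [h, ht.1, ht.2]
  calc ∑ σ : ι → α, (∏ t, p (σ t)) * (f (σ i) * g (σ j))
      = ∑ σ : ι → α, (∏ t, p (σ t)) * ∏ t, h t (σ t) := sum_congr rfl fun σ _ => by
        rw [Fintype.prod_eq_mul i j hij fun t ht => congrFun (hrest t ht) (σ t)]
        simp [h, hij.symm]
    _ = (∑ a, p a * f a) * ∑ a, p a * g a := by
        rw [sum_prod_weight_mul_prod,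
          Fintype.prod_eq_mul i j hij fun t ht => by simp [hrest t ht, hp]]
        simp [h, hij.symm]

theorem sum_prod_weight (hp : ∑ a, p a = 1) : ∑ σ : ι → α, ∏ t, p (σ t) = 1 := by
  simpa [hp] using sum_prod_weight_mul_prod (ι := ι) p (fun _ _ => 1)

theorem sum_prod_weight_mul_sq_sum_sub (hp : ∑ a, p a = 1) (X : α → ℝ) (c : ι → ℝ) (y : ℝ) :
    ∑ σ : ι → α, (∏ t, p (σ t)) * (∑ i, c i * X (σ i) - y) ^ 2
      = ((∑ a, p a * X a) * ∑ i, c i - y) ^ 2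
        + (∑ a, p a * (X a - ∑ b, p b * X b) ^ 2) * ∑ i, c i ^ 2 := by
  set μ := ∑ a, p a * X a
  set v := ∑ a, p a * (X a - μ) ^ 2
  set A := μ * ∑ i, c i - y
  set η : α → ℝ := fun a => X a - μ
  have hmean : ∑ a, p a * η a = 0 := by
    simp only [η, mul_sub, sum_sub_distrib, ← sum_mul, hp, one_mul, μ, sub_self]
  have hcov : ∀ i j,
      ∑ σ : ι → α, (∏ t, p (σ t)) * (η (σ i) * η (σ j)) = if i = j then v else 0 := by
    intro i j
    split_ifs with hij
    · subst hij
      simp_rw [← sq]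
      exact sum_prod_weight_mul_apply hp i (fun a => η a ^ 2)
    · rw [sum_prod_weight_mul_apply_mul_apply hp hij, hmean, zero_mul]
  have hcentre : ∀ σ : ι → α, ∑ i, c i * X (σ i) - y = A + ∑ i, c i * η (σ i) := by
    intro σ
    simp only [A, η, mul_sub, sum_sub_distrib, ← sum_mul]
    ring
  calc ∑ σ : ι → α, (∏ t, p (σ t)) * (∑ i, c i * X (σ i) - y) ^ 2
      = ∑ σ : ι → α, (A ^ 2 * ∏ t, p (σ t)
          + 2 * A * ∑ i, c i * ((∏ t, p (σ t)) * η (σ i))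
          + ∑ i, ∑ j, c i * c j * ((∏ t, p (σ t)) * (η (σ i) * η (σ j)))) := by
        refine sum_congr rfl fun σ _ => ?_
        rw [hcentre, add_sq, sq (∑ i, _), sum_mul_sum, mul_add, mul_add, mul_sum, mul_sum, mul_sum]
        simp only [mul_sum]
        congr 1
        · exact congrArg₂ _ (mul_comm _ _) (sum_congr rfl fun _ _ => by ring)
        · exact sum_congr rfl fun _ _ => sum_congr rfl fun _ _ => by ring
    _ = A ^ 2 * ∑ σ : ι → α, ∏ t, p (σ t)
          + 2 * A * ∑ i, c i * ∑ σ : ι → α, (∏ t, p (σ t)) * η (σ i)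
          + ∑ i, ∑ j, c i * c j * ∑ σ : ι → α, (∏ t, p (σ t)) * (η (σ i) * η (σ j)) := by
        simp only [sum_add_distrib, mul_sum]
        congr 1
        · exact congrArg _ sum_comm
        · rw [sum_comm]
          exact sum_congr rfl fun _ _ => sum_comm
    _ = A ^ 2 + v * ∑ i, c i ^ 2 := by
        simp only [sum_prod_weight hp, sum_prod_weight_mul_apply hp, hmean, hcov]
        simp [sq, sum_mul, mul_comm]

end ProductWeights

theorem sum_dropout_weight (q : ℝ) : ∑ b : Bool, (if b then q else 1 - q) = 1 := by
  simp

theorem dropout_mask_mean {q : ℝ} (hq : q ≠ 0) :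
    ∑ b : Bool, (if b then q else 1 - q) * (if b then 1 / q else 0) = 1 := by
  simp [hq]

theorem dropout_mask_variance {q : ℝ} (hq : q ≠ 0) :
    ∑ b : Bool, (if b then q else 1 - q) * ((if b then 1 / q else 0) - 1) ^ 2 = (1 - q) / q := by
  simp only [Fintype.sum_bool, if_true, Bool.false_eq_true, if_false]
  field_simp
  ring

theorem sum_dropout_weight_mul_sq_dropoutNet_sub (m d : ℕ) {q : ℝ} (hq : q ≠ 0) (a : Fin m → ℝ)
    (W : Fin m → Fin d → ℝ) (x : Fin d → ℝ) (y : ℝ) :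
    ∑ σ : Fin m → Bool, (∏ r, if σ r then q else 1 - q) * (dropoutNet m d q a σ W x - y) ^ 2
      = (twoNet m d a W x - y) ^ 2
        + (1 - q) / (m * q) * ∑ r, (a r * relu (∑ k, W r k * x k)) ^ 2 := by
  set c : Fin m → ℝ := fun r => 1 / Real.sqrt m * (a r * relu (∑ k, W r k * x k))
  have hdropout : ∀ σ : Fin m → Bool,
      dropoutNet m d q a σ W x = ∑ r, c r * (if σ r then 1 / q else 0) := fun σ => by
    rw [dropoutNet, mul_sum]
    exact sum_congr rfl fun r _ => by ring
  have htwo : twoNet m d a W x = ∑ r, c r := mul_sum _ _ _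
  have hc : ∑ r, c r ^ 2 = 1 / m * ∑ r, (a r * relu (∑ k, W r k * x k)) ^ 2 := by
    simp only [c, mul_pow, div_pow, one_pow, Real.sq_sqrt (Nat.cast_nonneg m), mul_sum]
  simp only [hdropout]
  rw [sum_prod_weight_mul_sq_sum_sub (sum_dropout_weight q) (fun b => if b then 1 / q else 0),
    dropout_mask_mean hq, dropout_mask_variance hq, one_mul, ← htwo, hc]
  ring

theorem dropout_loss_decomposition_general (m d n : ℕ)
    (q : ℝ) (hq0 : 0 < q)
    (a : Fin m → ℝ) (ha : ∀ r, a r = 1 ∨ a r = -1)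
    (x : Fin n → Fin d → ℝ) (y : Fin n → ℝ) (W : Fin m → Fin d → ℝ) :
    dropoutLoss m d n q a x y W
      = classicalLoss m d n a x y W
        + (1 - q) / (2 * m * q) * ∑ i, ∑ r, relu (∑ k, W r k * x i k) ^ 2 := by
  have ha_sq : ∀ r, a r ^ 2 = 1 := fun r => by rcases ha r with h | h <;> simp [h]
  calc dropoutLoss m d n q a x y W
      = 1 / 2 * ∑ i, ∑ σ : Fin m → Bool,
          (∏ r, if σ r then q else 1 - q) * (dropoutNet m d q a σ W (x i) - y i) ^ 2 := by
        simp only [dropoutLoss, mul_sum]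
        rw [sum_comm]
    _ = 1 / 2 * ∑ i, ((twoNet m d a W (x i) - y i) ^ 2
          + (1 - q) / (m * q) * ∑ r, relu (∑ k, W r k * x i k) ^ 2) := by
        simp only [sum_dropout_weight_mul_sq_dropoutNet_sub m d hq0.ne', mul_pow, ha_sq, one_mul]
    _ = _ := by
        rw [classicalLoss, sum_add_distrib, ← mul_sum]
        ring

/-- For every weight matrix `W`, the dropout loss decomposes as the
classical loss plus an explicit regularizer:
`L(W) = L̂(W) + (1−q)/(2mq) · Σ_i Σ_r φ(w_r^⊤ x_i)²`. -/
theorem dropout_loss_decomposition (m d n : ℕ) (hm : 0 < m)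
    (q : ℝ) (hq0 : 0 < q) (hq1 : q ≤ 1)
    (a : Fin m → ℝ) (ha : ∀ r, a r = 1 ∨ a r = -1)
    (x : Fin n → Fin d → ℝ) (y : Fin n → ℝ) (W : Fin m → Fin d → ℝ) :
    dropoutLoss m d n q a x y W
      = classicalLoss m d n a x y W
        + (1 - q) / (2 * m * q) * ∑ i, ∑ r, relu (∑ k, W r k * x i k) ^ 2 :=
  dropout_loss_decomposition_general m d n q hq0 a ha x y W
end

section
/- Let Φ ∈ ℝ^{n×D}, Y ∈ ℝ^n, λ > 0, and let Ψ ∈ ℝ^{D×D} be symmetric positive definite with λ_min(Ψ) ≥ Λ₀ > 0. Assume λ_min(ΦΦ^⊤) ≥ λ₀ > 0 and that Φ^⊤Φ and Ψ commute. Let W* = (Φ^⊤Φ + λΨ)^{−1}Φ^⊤Y and let W : ℝ → ℝ^D be differentiable and satisfy the gradient flow equation W'(t) = −(Φ^⊤Φ W(t) − Φ^⊤Y + λΨ W(t)) for all t ≥ 0. Then for all t ≥ 0, (d/dt)‖Φ W(t) − Φ W*‖₂² ≤ −(2λ₀ + 2λΛ₀) · ‖Φ W(t) − Φ W*‖₂².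 -/
/-!
With `A = ΦᵀΦ`, `M = A + λΨ` and `e = W t - W*`, the identity `M W* = ΦᵀY` turns the flow into
`W' = -M e`, so the derivative of `‖Φe‖²` is `-2⟨Φe, ΦMe⟩ = -2 (eᵀA²e + λ eᵀAΨe)`.
The first term is `(Φe)ᵀ(ΦΦᵀ)(Φe) ≥ λ₀‖Φe‖²`. For the second, `A` and `Ψ - Λ₀I` are commuting
positive semidefinite matrices, so their product is positive semidefinite and
`eᵀAΨe ≥ Λ₀ eᵀAe = Λ₀‖Φe‖²`.
-/

open Matrix

open scoped MatrixOrder ComplexOrder in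
theorem Matrix.PosSemidef.mul_of_commute {𝕜 n : Type*} [RCLike 𝕜] [Fintype n] [DecidableEq n]
    {A B : Matrix n n 𝕜} (hA : A.PosSemidef) (hB : B.PosSemidef) (h : Commute A B) :
    (A * B).PosSemidef :=
  (h.mul_nonneg hA.nonneg hB.nonneg).posSemidef

section Real

variable {m n : Type*} [Fintype m] [Fintype n]

theorem Matrix.posSemidef_sub_smul_one [DecidableEq n] {B : Matrix n n ℝ} (hB : B.IsHermitian)
    {c : ℝ} (hc : ∀ v, c * (v ⬝ᵥ v) ≤ v ⬝ᵥ B *ᵥ v) : (B - c • 1).PosSemidef := by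
  refine .of_dotProduct_mulVec_nonneg (hB.sub (isHermitian_one.smul (.all c))) fun v => ?_
  simpa [sub_mulVec, smul_mulVec, dotProduct_sub] using hc v

theorem Matrix.posSemidef_transpose_mul_self (Φ : Matrix m n ℝ) : (Φᵀ * Φ).PosSemidef := by
  simpa using posSemidef_conjTranspose_mul_self Φ

theorem Matrix.dotProduct_transpose_mul_mulVec {k : Type*} [Fintype k] (Φ : Matrix m n ℝ)
    (B : Matrix m k ℝ) (x : n → ℝ) (y : k → ℝ) : x ⬝ᵥ (Φᵀ * B) *ᵥ y = Φ *ᵥ x ⬝ᵥ B *ᵥ y := by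
  rw [← mulVec_mulVec, dotProduct_mulVec, vecMul_transpose]

theorem Matrix.PosSemidef.smul_dotProduct_le_mul_of_commute [DecidableEq n]
    {A B : Matrix n n ℝ} (hA : A.PosSemidef) (hB : B.IsHermitian)
    {c : ℝ} (hc : ∀ v, c * (v ⬝ᵥ v) ≤ v ⬝ᵥ B *ᵥ v) (hAB : Commute A B) (x : n → ℝ) :
    c * (x ⬝ᵥ A *ᵥ x) ≤ x ⬝ᵥ (A * B) *ᵥ x := by
  have hcomm : Commute A (B - c • 1) := hAB.sub_right ((Commute.one_right A).smul_right c)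
  have := (hA.mul_of_commute (posSemidef_sub_smul_one hB hc) hcomm).dotProduct_mulVec_nonneg x
  simp only [mul_sub, Matrix.mul_smul, mul_one, sub_mulVec, smul_mulVec, dotProduct_sub,
    dotProduct_smul, smul_eq_mul, star_trivial] at this
  linarith

theorem hasDerivAt_sum_sq_mulVec_sub (Φ : Matrix m n ℝ) (v : m → ℝ) {W : ℝ → n → ℝ}
    {W' : n → ℝ} {t : ℝ} (hW : HasDerivAt W W' t) :
    HasDerivAt (fun s => ∑ i, ((Φ *ᵥ W s) i - v i) ^ 2) (2 * ((Φ *ᵥ W t - v) ⬝ᵥ Φ *ᵥ W')) t := by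
  have hΦW : HasDerivAt (fun s => Φ *ᵥ W s) (Φ *ᵥ W') t :=
    (Φ.mulVecLin.toContinuousLinearMap.hasFDerivAt.comp_hasDerivAt t hW :)
  rw [dotProduct, Finset.mul_sum]
  refine HasDerivAt.fun_sum fun i _ =>
    (((hasDerivAt_pi.1 hΦW i).sub_const (v i)).fun_pow 2).congr_deriv ?_
  simp only [Pi.sub_apply]
  ring

theorem krr_smul_sq_le_dotProduct_mulVec_hessian (Φ : Matrix m n ℝ) [DecidableEq n]
    {Ψ : Matrix n n ℝ} (hΨ : Ψ.IsHermitian) {lam : ℝ} (hlam : 0 ≤ lam)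
    {Λ₀ : ℝ} (hΨmin : ∀ v, Λ₀ * (v ⬝ᵥ v) ≤ v ⬝ᵥ Ψ *ᵥ v)
    {lam₀ : ℝ} (hΦmin : ∀ v, lam₀ * (v ⬝ᵥ v) ≤ v ⬝ᵥ (Φ * Φᵀ) *ᵥ v)
    (hcomm : Commute (Φᵀ * Φ) Ψ) (e : n → ℝ) :
    (lam₀ + lam * Λ₀) * (Φ *ᵥ e ⬝ᵥ Φ *ᵥ e) ≤ Φ *ᵥ e ⬝ᵥ Φ *ᵥ ((Φᵀ * Φ + lam • Ψ) *ᵥ e) := by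
  have hAA : lam₀ * (Φ *ᵥ e ⬝ᵥ Φ *ᵥ e) ≤ e ⬝ᵥ (Φᵀ * Φ * (Φᵀ * Φ)) *ᵥ e := by
    rw [show Φᵀ * Φ * (Φᵀ * Φ) = Φᵀ * (Φ * Φᵀ * Φ) by simp only [Matrix.mul_assoc],
      dotProduct_transpose_mul_mulVec, ← mulVec_mulVec]
    exact hΦmin _
  have hAΨ : Λ₀ * (Φ *ᵥ e ⬝ᵥ Φ *ᵥ e) ≤ e ⬝ᵥ (Φᵀ * Φ * Ψ) *ᵥ e := by
    rw [← dotProduct_transpose_mul_mulVec]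
    exact (posSemidef_transpose_mul_self Φ).smul_dotProduct_le_mul_of_commute hΨ hΨmin hcomm e
  have hsplit : Φ *ᵥ e ⬝ᵥ Φ *ᵥ ((Φᵀ * Φ + lam • Ψ) *ᵥ e)
      = e ⬝ᵥ (Φᵀ * Φ * (Φᵀ * Φ)) *ᵥ e + lam * (e ⬝ᵥ (Φᵀ * Φ * Ψ) *ᵥ e) := by
    rw [← dotProduct_transpose_mul_mulVec, mulVec_mulVec, mul_add, Matrix.mul_smul,
      add_mulVec, smul_mulVec, dotProduct_add, dotProduct_smul, smul_eq_mul]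
  rw [hsplit, add_mul, mul_assoc]
  exact add_le_add hAA (mul_le_mul_of_nonneg_left hAΨ hlam)

end Real

theorem krr_gradient_flow_derivative_general (n D : ℕ)
    (Φ : Matrix (Fin n) (Fin D) ℝ) (Y : Fin n → ℝ)
    (lam : ℝ) (hlam : 0 < lam)
    (Ψ : Matrix (Fin D) (Fin D) ℝ) (hΨ : Ψ.PosDef)
    (Λ₀ : ℝ)
    (hΨmin : ∀ v : Fin D → ℝ,
      Λ₀ * dotProduct v v ≤ dotProduct v (Ψ.mulVec v))
    (lam₀ : ℝ)
    (hΦmin : ∀ v : Fin n → ℝ,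
      lam₀ * dotProduct v v
        ≤ dotProduct v ((Φ * Φ.transpose).mulVec v))
    (hcomm : Commute (Φ.transpose * Φ) Ψ)
    (Wstar : Fin D → ℝ)
    (hWstar : Wstar = (Φ.transpose * Φ + lam • Ψ)⁻¹.mulVec (Φ.transpose.mulVec Y))
    (W : ℝ → Fin D → ℝ)
    (hW : ∀ t : ℝ, 0 ≤ t →
      HasDerivAt W
        (-((Φ.transpose * Φ).mulVec (W t) - Φ.transpose.mulVec Y
            + lam • Ψ.mulVec (W t))) t) :
    ∀ t : ℝ, 0 ≤ t →
      deriv (fun s => ∑ i, (Φ.mulVec (W s) i - Φ.mulVec Wstar i) ^ 2) t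
        ≤ -(2 * lam₀ + 2 * lam * Λ₀)
            * ∑ i, (Φ.mulVec (W t) i - Φ.mulVec Wstar i) ^ 2 := by
  intro t ht
  set M := Φ.transpose * Φ + lam • Ψ
  have hMWstar : M *ᵥ Wstar = Φᵀ *ᵥ Y := by
    have hMdet : IsUnit M.det := (isUnit_iff_isUnit_det M).1
      ((hΨ.smul hlam).posSemidef_add (posSemidef_transpose_mul_self Φ)).isUnit
    rw [hWstar, mulVec_mulVec, mul_nonsing_inv _ hMdet, one_mulVec]
  have hflow : HasDerivAt W (-(M *ᵥ (W t - Wstar))) t := by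
    convert hW t ht using 2
    rw [mulVec_sub, hMWstar, add_mulVec, smul_mulVec]
    abel
  have hsq : ∑ i, ((Φ *ᵥ W t) i - (Φ *ᵥ Wstar) i) ^ 2
      = Φ *ᵥ (W t - Wstar) ⬝ᵥ Φ *ᵥ (W t - Wstar) := by
    simp only [mulVec_sub, dotProduct, Pi.sub_apply, sq]
  rw [(hasDerivAt_sum_sq_mulVec_sub Φ (Φ *ᵥ Wstar) hflow).deriv, hsq, ← mulVec_sub, mulVec_neg,
    dotProduct_neg]
  linarith [krr_smul_sq_le_dotProduct_mulVec_hessian Φ hΨ.isHermitian hlam.le hΨmin hΦmin hcomm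
    (W t - Wstar)]

/-- Let `Φ ∈ ℝ^{n×D}`, `Y ∈ ℝ^n`, `λ > 0`, and `Ψ ∈ ℝ^{D×D}` symmetric
positive definite with `λ_min(Ψ) ≥ Λ₀ > 0` (expressed via the quadratic form).  Assume
`λ_min(ΦΦ^⊤) ≥ λ₀ > 0` and that `Φ^⊤Φ` and `Ψ` commute.  Let
`W* = (Φ^⊤Φ + λΨ)^{−1}Φ^⊤Y` and let `W : ℝ → ℝ^D` satisfy the gradient flow equation
`W'(t) = −(Φ^⊤Φ W(t) − Φ^⊤Y + λΨ W(t))` for all `t ≥ 0`.  Then for all `t ≥ 0`,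
`(d/dt)‖Φ W(t) − Φ W*‖₂² ≤ −(2λ₀ + 2λΛ₀)·‖Φ W(t) − Φ W*‖₂²`. -/
theorem krr_gradient_flow_derivative (n D : ℕ)
    (Φ : Matrix (Fin n) (Fin D) ℝ) (Y : Fin n → ℝ)
    (lam : ℝ) (hlam : 0 < lam)
    (Ψ : Matrix (Fin D) (Fin D) ℝ) (hΨ : Ψ.PosDef)
    (Λ₀ : ℝ) (hΛ₀ : 0 < Λ₀)
    (hΨmin : ∀ v : Fin D → ℝ,
      Λ₀ * dotProduct v v ≤ dotProduct v (Ψ.mulVec v))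
    (lam₀ : ℝ) (hlam₀ : 0 < lam₀)
    (hΦmin : ∀ v : Fin n → ℝ,
      lam₀ * dotProduct v v
        ≤ dotProduct v ((Φ * Φ.transpose).mulVec v))
    (hcomm : Commute (Φ.transpose * Φ) Ψ)
    (Wstar : Fin D → ℝ)
    (hWstar : Wstar = (Φ.transpose * Φ + lam • Ψ)⁻¹.mulVec (Φ.transpose.mulVec Y))
    (W : ℝ → Fin D → ℝ)
    (hW : ∀ t : ℝ, 0 ≤ t →
      HasDerivAt W
        (-((Φ.transpose * Φ).mulVec (W t) - Φ.transpose.mulVec Y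
            + lam • Ψ.mulVec (W t))) t) :
    ∀ t : ℝ, 0 ≤ t →
      deriv (fun s => ∑ i, (Φ.mulVec (W s) i - Φ.mulVec Wstar i) ^ 2) t
        ≤ -(2 * lam₀ + 2 * lam * Λ₀)
            * ∑ i, (Φ.mulVec (W t) i - Φ.mulVec Wstar i) ^ 2 :=
  krr_gradient_flow_derivative_general n D Φ Y lam hlam Ψ hΨ Λ₀ hΨmin lam₀ hΦmin hcomm Wstar hWstar
    W hW
end
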